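/- Let Q be a quiver with one vertex and d loops x1,...,xd, and let A = k[x1,...,xd]/(f) with f having leading term x_d^n in lexicographic order. With the reduction system R = {(x_d^n, x_d^n - f)} ∪ {(x_j x_i, x_i x_j) : i < j}, the set of m-ambiguities (for m ≥ 0) is exactly S_{m+2} = { x_d^{nj} x_{i_k} ⋯ x_{i_2} x_{i_1} : j, k ≥ 0, 1 ≤ i_1 < ⋯ < i_k ≤ d, 2j + k = m + 2 }. In particular the number of m-ambiguities is Σ_{2j+k=m+2} (d choose k). -/

import Mathlib

/-!
STATEMENT 16: For the reduction system R = {(x_dⁿ, x_dⁿ - f)} ∪ {(x_j x_i, x_i x_j) : i < j}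
on k⟨x₁,...,x_d⟩ (so S = {x_dⁿ} ∪ {x_j x_i : i < j}, and irreducible monomials are
x₁^{a₁}⋯x_d^{a_d} with a_d < n), the set of m-ambiguities is exactly
S_{m+2} = {x_d^{nj} x_{i_l} ⋯ x_{i_1} : j, l ≥ 0, i_1 < ⋯ < i_l, 2j + l = m+2}.
In particular the number of m-ambiguities is Σ_{2j+l=m+2} (d choose l).

An m-ambiguity is a word p = u₀u₁⋯u_{m+1} with u₀ a single letter, each u_i (i ≥ 1)
irreducible, each u_i u_{i+1} reducible, and u_i e irreducible for every proper
left subword e of u_{i+1}.  Words are written left-to-right, a word being a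
monomial in the free algebra.
-/

variable (d n : ℕ)

/-- The set S of left-hand sides: x_dⁿ and x_j x_i for i < j. -/
def SWords (hd : 0 < d) : Set (List (Fin d)) :=
  {List.replicate n ⟨d - 1, by omega⟩} ∪ {w | ∃ i j : Fin d, i < j ∧ w = [j, i]}

/-- A word is reducible if it contains an element of S as a subword. -/
def Reducible (hd : 0 < d) (w : List (Fin d)) : Prop :=
  ∃ a s b, s ∈ SWords d n hd ∧ w = a ++ s ++ b

/-- An m-ambiguity. -/
def IsAmbiguity (hd : 0 < d) (m : ℕ) (p : List (Fin d)) : Prop :=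
  ∃ u : Fin (m + 2) → List (Fin d),
    (∃ a : Fin d, u 0 = [a]) ∧
    (∀ i : Fin (m + 2), 0 < (i : ℕ) → ¬ Reducible d n hd (u i)) ∧
    p = (List.ofFn u).flatten ∧
    (∀ i : Fin (m + 1),
      Reducible d n hd (u i.castSucc ++ u i.succ) ∧
      ∀ e, e <+: u i.succ → e ≠ u i.succ → ¬ Reducible d n hd (u i.castSucc ++ e))

section Aux
variable {d n : ℕ}

/-- the top letter -/
def tp (hd : 0 < d) : Fin d := ⟨d - 1, Nat.sub_lt hd Nat.one_pos⟩

variable (hd : 0 < d)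

lemma le_tp (b : Fin d) : b ≤ tp hd := by
  have := b.2; show b.val ≤ d - 1; omega

lemma lt_tp_of_ne {b : Fin d} (h : b ≠ tp hd) : b < tp hd :=
  lt_of_le_of_ne (le_tp hd b) (by exact_mod_cast h)

/-- reducibility is monotone under infix -/
lemma red_infix {w₁ w₂ : List (Fin d)} (h : w₁ <:+: w₂) :
    Reducible d n hd w₁ → Reducible d n hd w₂ := by
  rintro ⟨a, s, b, hs, rfl⟩
  obtain ⟨x, y, rfl⟩ := h
  exact ⟨x ++ a, s, b ++ y, hs, by simp⟩

lemma not_red_replicate {k : ℕ} (hk : k < n) :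
    ¬ Reducible d n hd (List.replicate k (tp hd)) := by
  rintro ⟨a, s, b, hs, heq⟩
  have hsub : s <:+: List.replicate k (tp hd) := ⟨a, b, heq.symm⟩
  have hmem : ∀ x ∈ s, x = tp hd := fun x hx =>
    List.eq_of_mem_replicate (hsub.subset hx)
  rcases hs with hs | ⟨i, j, hij, rfl⟩
  · simp only [Set.mem_singleton_iff] at hs
    have hlen : s.length ≤ k := by
      have := hsub.length_le; simpa using this
    rw [hs] at hlen; simp at hlen; omega
  · have h1 : j = tp hd := hmem j (by simp)
    have h2 : i = tp hd := hmem i (by simp)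
    rw [h1, h2] at hij; exact lt_irrefl _ hij

lemma not_red_single (hn : 2 ≤ n) (b : Fin d) : ¬ Reducible d n hd [b] := by
  rintro ⟨a, s, c, hs, heq⟩
  have hlen : a.length + (s.length + c.length) = 1 := by
    have := congrArg List.length heq; simpa using this.symm
  have : 2 ≤ s.length := by
    rcases hs with hs | ⟨i, j, hij, rfl⟩
    · simp only [Set.mem_singleton_iff] at hs; rw [hs]; simpa using hn
    · simp
  omega

lemma red_rep_n : Reducible d n hd (List.replicate n (tp hd)) :=
  ⟨[], _, [], Or.inl rfl, by simp [tp]⟩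

lemma red_desc {i j : Fin d} (h : i < j) (a b : List (Fin d)) :
    Reducible d n hd (a ++ [j, i] ++ b) :=
  ⟨a, [j, i], b, Or.inr ⟨i, j, h, rfl⟩, rfl⟩

end Aux

section Aux2
variable {d n : ℕ} (hd : 0 < d)

lemma step {u v : List (Fin d)} (hu : ¬Reducible d n hd u) (hv : ¬Reducible d n hd v)
    (hred : Reducible d n hd (u ++ v))
    (hmin : ∀ e, e <+: v → e ≠ v → ¬ Reducible d n hd (u ++ e)) :
    (∃ c b : Fin d, b < c ∧ v = [b] ∧ [c] <:+ u) ∨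
    (∃ k, 1 ≤ k ∧ k < n ∧ List.replicate k (tp hd) <:+ u ∧
      v = List.replicate (n - k) (tp hd)) := by
  obtain ⟨a, s, b, hs, heq⟩ := hred
  rcases List.append_eq_append_iff.mp heq.symm with ⟨a', h1, h2⟩ | ⟨c', h1, h2⟩
  · exact absurd ⟨a, s, a', hs, by rw [h1]⟩ hu
  rcases List.append_eq_append_iff.mp h1 with ⟨x, hx1, hx2⟩ | ⟨y, hy1, hy2⟩
  swap
  · exact absurd ⟨y, s, b, hs, by rw [h2, hy2, List.append_assoc]⟩ hv
  -- hx1 : u = a ++ x, hx2 : s = x ++ c', h2 : v = c' ++ b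
  have hc' : c' ≠ [] := by
    rintro rfl
    exact hu ⟨a, s, [], hs, by rw [hx1, hx2]; simp⟩
  have hav : c' = v := by
    by_contra hne
    refine hmin c' ⟨b, h2.symm⟩ hne ⟨a, s, [], hs, ?_⟩
    rw [hx1, hx2]; simp
  subst hav
  have hx0 : x ≠ [] := by
    rintro rfl
    simp only [List.nil_append] at hx2
    exact hv (hx2 ▸ ⟨[], s, [], hs, by simp⟩)
  rcases hs with hs | ⟨i, j, hij, hsval⟩
  · -- s = replicate n t
    simp only [Set.mem_singleton_iff] at hs
    rw [hs] at hx2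
    have hxall : ∀ z ∈ x, z = tp hd := fun z hz =>
      List.eq_of_mem_replicate (hx2 ▸ List.mem_append_left _ hz : z ∈ List.replicate n (tp hd))
    have hvall : ∀ z ∈ c', z = tp hd := fun z hz =>
      List.eq_of_mem_replicate (hx2 ▸ List.mem_append_right _ hz : z ∈ List.replicate n (tp hd))
    have hxr : x = List.replicate x.length (tp hd) := List.eq_replicate_of_mem hxall
    have hvr : c' = List.replicate c'.length (tp hd) := List.eq_replicate_of_mem hvall
    have hlen : x.length + c'.length = n := by
      have := congrArg List.length hx2; simp at this; omega
    have hx1' : 1 ≤ x.length := List.length_pos_iff.mpr hx0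
    have hv1' : 1 ≤ c'.length := List.length_pos_iff.mpr hc'
    refine Or.inr ⟨x.length, hx1', by omega, ⟨a, by rw [← hxr, hx1]⟩, ?_⟩
    rw [hvr]; congr 1; omega
  · -- s = [j, i]
    rw [hsval] at hx2
    have hlx : x.length + c'.length = 2 := by
      have := congrArg List.length hx2; simp at this; omega
    have hx1' : 1 ≤ x.length := List.length_pos_iff.mpr hx0
    have hv1' : 1 ≤ c'.length := List.length_pos_iff.mpr hc'
    have hxl : x.length = 1 := by omega
    have hvl : c'.length = 1 := by omega
    rcases x with _ | ⟨x0, x'⟩; · simp at hxl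
    rcases c' with _ | ⟨v0, v'⟩; · simp at hvl
    simp only [List.length_cons, Nat.add_eq_right, List.length_eq_zero_iff] at hxl hvl
    subst hxl; subst hvl
    simp only [List.cons_append, List.nil_append, List.cons.injEq, and_true] at hx2
    obtain ⟨rfl, rfl⟩ := hx2
    exact Or.inl ⟨j, i, hij, rfl, ⟨a, hx1.symm⟩⟩

end Aux2

section Fwd
variable {d n : ℕ} (hd : 0 < d)

/-- size of the i-th piece in the t-phase -/
def tsize (n i : ℕ) : ℕ := if i % 2 = 0 then 1 else n - 1

lemma rep_prefix_rep {a b : ℕ} (x : Fin d) (h : a ≤ b) :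
    List.replicate a x <+: List.replicate b x :=
  ⟨List.replicate (b - a) x, by rw [← List.replicate_add]; congr 1; omega⟩

lemma forward (hn : 2 ≤ n) {m : ℕ} {p : List (Fin d)} (h : IsAmbiguity d n hd m p) :
    ∃ j w, List.Chain' (· > ·) w ∧ 2 * j + w.length = m + 2 ∧
      p = List.replicate (n * j) (tp hd) ++ w := by
  classical
  obtain ⟨u, ⟨a, h0⟩, hirr, hp, hjun⟩ := h
  set U : ℕ → List (Fin d) := fun i => if h : i < m + 2 then u ⟨i, h⟩ else [] with hU
  have hU0 : U 0 = [a] := by simp [hU]; exact h0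
  have hUirr : ∀ i, i < m + 2 → ¬ Reducible d n hd (U i) := by
    intro i hi
    rcases Nat.eq_zero_or_pos i with rfl | hpos
    · rw [hU0]; exact not_red_single hd hn a
    · simpa [hU, dif_pos hi] using hirr ⟨i, hi⟩ hpos
  have hUjun : ∀ i, i + 1 < m + 2 →
      Reducible d n hd (U i ++ U (i+1)) ∧
      ∀ e, e <+: U (i+1) → e ≠ U (i+1) → ¬ Reducible d n hd (U i ++ e) := by
    intro i hi
    have := hjun ⟨i, by omega⟩
    simpa [hU, Fin.castSucc, Fin.succ, dif_pos hi, dif_pos (show i < m + 2 by omega)]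
      using this
  -- the step analysis at junction i
  have hstep : ∀ i, i + 1 < m + 2 →
      (∃ c b : Fin d, b < c ∧ U (i+1) = [b] ∧ [c] <:+ U i) ∨
      (∃ k, 1 ≤ k ∧ k < n ∧ List.replicate k (tp hd) <:+ U i ∧
        U (i+1) = List.replicate (n - k) (tp hd)) := by
    intro i hi
    exact step hd (hUirr i (by omega)) (hUirr (i+1) hi) (hUjun i hi).1 (hUjun i hi).2
  set P : ℕ → Prop := fun i => i < m + 2 ∧ ∃ b : Fin d, b < tp hd ∧ U i = [b] with hP
  set r : ℕ := if h : ∃ i, P i then Nat.find h else m + 2 with hr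
  have hrle : r ≤ m + 2 := by
    rw [hr]; split
    · next h => exact le_of_lt (lt_of_le_of_lt (Nat.find_le (h.choose_spec)) h.choose_spec.1)
    · exact le_rfl
  have hrP : ∀ i, i < r → ¬ P i := by
    intro i hi
    rw [hr] at hi; revert hi; split
    · next h => exact fun hi => Nat.find_min h hi
    · next h => exact fun _ => fun hpi => h ⟨i, hpi⟩
  have hrr : r < m + 2 → P r := by
    intro hlt
    rw [hr] at hlt ⊢; revert hlt; split
    · next h => exact fun _ => Nat.find_spec h
    · omega
  have claimA : ∀ i, i < r → U i = List.replicate (tsize n i) (tp hd) := by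
    intro i
    induction i with
    | zero =>
      intro h0r
      have hnp := hrP 0 h0r
      rw [hP] at hnp
      simp only [not_and, not_exists] at hnp
      have hat : a = tp hd := by
        by_contra hne
        exact hnp (by omega) a (lt_tp_of_ne hd hne) hU0
      rw [hU0, hat]; simp [tsize]
    | succ i ih =>
      intro hir
      have hi : i < r := by omega
      have hUi := ih hi
      have hi2 : i + 1 < m + 2 := by omega
      rcases hstep i hi2 with ⟨c, b, hbc, hveq, hsuf⟩ | ⟨k, hk1, hk2, hsuf, hveq⟩
      · -- descent: contradicts i+1 < r
        exfalso
        have hc : c = tp hd := by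
          have : c ∈ U i := hsuf.sublist.subset (by simp)
          rw [hUi] at this
          exact List.eq_of_mem_replicate this
        refine hrP (i+1) hir ⟨hi2, b, hc ▸ hbc, hveq⟩
      · -- t-block
        have hts : 1 ≤ tsize n i ∧ tsize n i ≤ n - 1 := by
          unfold tsize; split <;> omega
        have hkle : k ≤ tsize n i := by
          have := hsuf.length_le
          rw [hUi] at this; simpa using this
        have hkeq : k = tsize n i := by
          by_contra hne
          have hklt : k < tsize n i := by omega
          have hmin := (hUjun i hi2).2 (List.replicate (n - tsize n i) (tp hd))
          refine hmin ?_ ?_ ?_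
          · rw [hveq]; exact rep_prefix_rep _ (by omega)
          · rw [hveq]
            intro hcon
            have := congrArg List.length hcon
            simp at this; omega
          · rw [hUi, ← List.replicate_add]
            have : tsize n i + (n - tsize n i) = n := by omega
            rw [this]
            exact red_rep_n hd
        rw [hveq, hkeq]
        congr 1
        unfold tsize
        rcases Nat.even_or_odd i with he | ho
        · have h1 : i % 2 = 0 := Nat.even_iff.mp he
          have h2 : (i+1) % 2 = 1 := by omega
          simp [h1, h2]
        · have h1 : i % 2 = 1 := Nat.odd_iff.mp ho
          have h2 : (i+1) % 2 = 0 := by omega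
          simp [h1, h2]; omega
  have claimB : ∀ i, r ≤ i → i < m + 2 → ∃ b : Fin d, b < tp hd ∧ U i = [b] := by
    intro i
    induction i with
    | zero =>
      intro hri h0
      have hr0 : r = 0 := by omega
      obtain ⟨-, b, hb, hUr⟩ := hrr (by omega)
      exact ⟨b, hb, by rw [← hr0]; exact hUr⟩
    | succ i ih =>
      intro hri hi2
      rcases Nat.lt_or_ge i r with hlt | hge
      · have hreq : r = i + 1 := by omega
        obtain ⟨-, b, hb, hUr⟩ := hrr (by omega)
        exact ⟨b, hb, by rw [← hreq]; exact hUr⟩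
      · obtain ⟨b, hb, hUi⟩ := ih hge (by omega)
        rcases hstep i hi2 with ⟨c, b', hb'c, hveq, hsuf⟩ | ⟨k, hk1, hk2, hsuf, hveq⟩
        · have hc : c = b := by
            have : c ∈ U i := hsuf.sublist.subset (by simp)
            rw [hUi] at this; simpa using this
          exact ⟨b', lt_trans (hc ▸ hb'c) hb, hveq⟩
        · exfalso
          have : tp hd ∈ U i := hsuf.sublist.subset (by
            rcases k with _ | k; · omega
            simp [List.replicate_succ])
          rw [hUi] at this; simp at this
          rw [this] at hb; exact lt_irrefl _ hb
  have claimC : ∀ i, r ≤ i → i + 1 < m + 2 → ∀ b b' : Fin d,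
      U i = [b] → U (i+1) = [b'] → b' < b := by
    intro i hri hi2 b b' hUi hUi'
    rcases hstep i hi2 with ⟨c, b'', hb, hveq, hsuf⟩ | ⟨k, hk1, hk2, hsuf, hveq⟩
    · have hc : c = b := by
        have : c ∈ U i := hsuf.sublist.subset (by simp)
        rw [hUi] at this; simpa using this
      rw [hUi'] at hveq
      simp only [List.cons.injEq, and_true] at hveq
      rw [hveq, ← hc]; exact hb
    · exfalso
      obtain ⟨b2, hb2, hU2⟩ := claimB (i+1) (by omega) hi2
      rw [hUi'] at hU2
      simp only [List.cons.injEq, and_true] at hU2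
      rw [hUi'] at hveq
      have : b' ∈ List.replicate (n - k) (tp hd) := by rw [← hveq]; simp
      have hbt : b' = tp hd := List.eq_of_mem_replicate this
      rw [← hU2, hbt] at hb2; exact lt_irrefl _ hb2
  have claimE : ∀ i, i ≤ r → ((List.range i).map U).flatten
      = List.replicate (n * (i/2) + i % 2) (tp hd) := by
    intro i
    induction i with
    | zero => intro _; simp
    | succ i ih =>
      intro hir
      rw [List.range_succ, List.map_append, List.flatten_append, ih (by omega)]
      simp only [List.map_cons, List.map_nil, List.flatten_cons, List.flatten_nil,
        List.append_nil]
      rw [claimA i (by omega), ← List.replicate_add]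
      congr 1
      unfold tsize
      rcases Nat.even_or_odd i with he | ho
      · obtain ⟨j, rfl⟩ := he
        have h1 : (j + j) % 2 = 0 := by omega
        have h2 : (j + j) / 2 = j := by omega
        have h3 : (j + j + 1) / 2 = j := by omega
        have h4 : (j + j + 1) % 2 = 1 := by omega
        simp [h1, h2, h3, h4]
      · obtain ⟨j, rfl⟩ := ho
        have h1 : (2 * j + 1) % 2 = 1 := by omega
        have h2 : (2 * j + 1) / 2 = j := by omega
        have h3 : (2 * j + 1 + 1) / 2 = j + 1 := by omega
        have h4 : (2 * j + 1 + 1) % 2 = 0 := by omega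
        rw [h1, h2, h3, h4]
        simp only [if_neg (by omega : ¬ (1:ℕ) = 0), if_pos rfl]
        rw [Nat.mul_succ]
        generalize n * j = M
        omega
  have claimD : ∀ k i, i + k = m + 2 → r ≤ i →
      ∃ w : List (Fin d), ((List.range' i k).map U).flatten = w ∧ w.length = k ∧
        (∀ x ∈ w, x < tp hd) ∧ List.Chain' (· > ·) w ∧
        (∀ c : Fin d, U i = [c] → w.head? = if k = 0 then none else some c) := by
    intro k
    induction k with
    | zero => intro i _ _; exact ⟨[], by simp, rfl, by simp, List.isChain_nil, by simp⟩
    | succ k ih =>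
      intro i hik hri
      obtain ⟨b, hb, hUi⟩ := claimB i hri (by omega)
      obtain ⟨w', hw'eq, hw'len, hw'mem, hw'chain, hw'head⟩ := ih (i+1) (by omega) (by omega)
      refine ⟨b :: w', ?_, by simp [hw'len], ?_, ?_, ?_⟩
      · rw [List.range'_succ, List.map_cons, List.flatten_cons, hUi, hw'eq]
        rfl
      · intro x hx
        rcases List.mem_cons.mp hx with rfl | hx'
        · exact hb
        · exact hw'mem x hx'
      · refine List.isChain_cons.mpr ⟨?_, hw'chain⟩
        intro y hy
        have hk0 : k ≠ 0 := by
          rintro rfl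
          rw [List.length_eq_zero_iff.mp hw'len] at hy; simp at hy
        obtain ⟨b2, hb2, hU2⟩ := claimB (i+1) (by omega) (by omega)
        have := hw'head b2 hU2
        rw [if_neg hk0] at this
        rw [this] at hy
        simp at hy
        subst hy
        exact claimC i hri (by omega) b b2 hUi hU2
      · intro c hc
        rw [hUi] at hc
        simp only [List.cons.injEq, and_true] at hc
        simp [hc]
  -- assemble
  have hpU : p = ((List.range (m+2)).map U).flatten := by
    rw [hp, List.ofFn_eq_map, ← List.map_coe_finRange_eq_range (n := m+2), List.map_map]
    congr 1
    apply List.map_congr_left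
    intro i _
    simp only [Function.comp_apply, hU, dif_pos i.2, Fin.eta]
  have hsplit : List.range (m+2) = List.range r ++ List.range' r (m+2-r) := by
    rw [List.range_eq_range', List.range_eq_range']
    have := List.range'_append (s := 0) (m := r) (n := m+2-r) (step := 1)
    simp only [Nat.zero_add, Nat.one_mul] at this
    rw [this]
    congr 1; omega
  obtain ⟨w, hweq, hwlen, hwmem, hwchain, -⟩ := claimD (m+2-r) r (by omega) le_rfl
  have hpfull : p = List.replicate (n * (r/2) + r % 2) (tp hd) ++ w := by
    rw [hpU, hsplit, List.map_append, List.flatten_append, claimE r le_rfl, hweq]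
  rcases Nat.even_or_odd r with he | ho
  · obtain ⟨j, hj⟩ := he
    refine ⟨j, w, hwchain, by omega, ?_⟩
    have hr2 : r / 2 = j := by omega
    have hrm : r % 2 = 0 := by omega
    rw [hpfull, hr2, hrm, Nat.add_zero]
  · obtain ⟨j, hj⟩ := ho
    refine ⟨j, tp hd :: w, ?_, by simp only [List.length_cons]; omega, ?_⟩
    · refine List.isChain_cons.mpr ⟨?_, hwchain⟩
      intro y hy
      exact hwmem y (List.mem_of_mem_head? hy)
    · rw [hpfull]
      have h5 : n * (r/2) + r % 2 = n * j + 1 := by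
        have : r / 2 = j := by omega
        rw [this]; omega
      rw [h5, List.replicate_succ', List.append_assoc]
      rfl

end Fwd

section Bwd
variable {d n : ℕ} (hd : 0 < d)

lemma tsize_pos (hn : 2 ≤ n) (i : ℕ) : 1 ≤ tsize n i := by unfold tsize; split <;> omega

lemma tsize_lt (hn : 2 ≤ n) (i : ℕ) : tsize n i < n := by unfold tsize; split <;> omega

lemma tsize_sum (hn : 2 ≤ n) (i : ℕ) : tsize n i + tsize n (i+1) = n := by
  unfold tsize
  rcases Nat.even_or_odd i with he | ho
  · have h1 : i % 2 = 0 := Nat.even_iff.mp he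
    have h2 : (i+1) % 2 = 1 := by omega
    simp [h1, h2]; omega
  · have h1 : i % 2 = 1 := Nat.odd_iff.mp ho
    have h2 : (i+1) % 2 = 0 := by omega
    simp [h1, h2]; omega

lemma flatten_singletons {α : Type*} (dflt : α) :
    ∀ (v : List α) (s : ℕ),
      ((List.range' s v.length).map (fun i => [v.getD (i - s) dflt])).flatten = v := by
  intro v
  induction v with
  | nil => intro s; simp
  | cons x v ih =>
    intro s
    rw [List.length_cons, List.range'_succ, List.map_cons, List.flatten_cons]
    have h1 : (x :: v).getD (s - s) dflt = x := by simp
    have h2 : (List.range' (s+1) v.length).map (fun i => [(x :: v).getD (i - s) dflt])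
        = (List.range' (s+1) v.length).map (fun i => [v.getD (i - (s+1)) dflt]) := by
      apply List.map_congr_left
      intro i hi
      have his : s + 1 ≤ i := (List.mem_range'_1.mp hi).1
      have : i - s = (i - (s+1)) + 1 := by omega
      rw [this]; simp
    rw [h1, h2, ih (s+1)]
    rfl

lemma flatten_rep (hn : 2 ≤ n) (U : ℕ → List (Fin d)) (r : ℕ)
    (hA : ∀ i, i < r → U i = List.replicate (tsize n i) (tp hd)) :
    ∀ i, i ≤ r →
      ((List.range i).map U).flatten = List.replicate (n * (i/2) + i % 2) (tp hd) := by
  intro i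
  induction i with
  | zero => intro _; simp
  | succ i ih =>
    intro hir
    rw [List.range_succ, List.map_append, List.flatten_append, ih (by omega)]
    simp only [List.map_cons, List.map_nil, List.flatten_cons, List.flatten_nil,
      List.append_nil]
    rw [hA i (by omega), ← List.replicate_add]
    congr 1
    unfold tsize
    rcases Nat.even_or_odd i with he | ho
    · obtain ⟨j, rfl⟩ := he
      have h1 : (j + j) % 2 = 0 := by omega
      have h2 : (j + j) / 2 = j := by omega
      have h3 : (j + j + 1) / 2 = j := by omega
      have h4 : (j + j + 1) % 2 = 1 := by omega
      simp [h1, h2, h3, h4]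
    · obtain ⟨j, rfl⟩ := ho
      have h1 : (2 * j + 1) % 2 = 1 := by omega
      have h2 : (2 * j + 1) / 2 = j := by omega
      have h3 : (2 * j + 1 + 1) / 2 = j + 1 := by omega
      have h4 : (2 * j + 1 + 1) % 2 = 0 := by omega
      rw [h1, h2, h3, h4]
      simp only [if_neg (by omega : ¬ (1:ℕ) = 0), if_pos rfl]
      rw [Nat.mul_succ]
      generalize n * j = M
      omega

lemma prefix_single {α : Type*} {e : List α} {b : α} (h : e <+: [b]) (hne : e ≠ [b]) :
    e = [] := by
  rcases e with _ | ⟨x, e'⟩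
  · rfl
  · obtain ⟨tl, ht⟩ := h
    simp only [List.cons_append, List.cons.injEq] at ht
    obtain ⟨rfl, ht2⟩ := ht
    rcases List.append_eq_nil_iff.mp ht2 with ⟨rfl, rfl⟩
    exact absurd rfl hne

lemma backward (hn : 2 ≤ n) {m : ℕ} (j : ℕ) (w : List (Fin d))
    (hch : List.Chain' (· > ·) w) (hlen : 2 * j + w.length = m + 2) :
    IsAmbiguity d n hd m (List.replicate (n * j) (tp hd) ++ w) := by
  classical
  -- split off a leading top letter if present
  obtain ⟨w', r, hr2j, hww', hrlen, hw'mem, hw'ch⟩ :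
      ∃ (w' : List (Fin d)) (r : ℕ), (r = 2 * j ∨ r = 2 * j + 1) ∧
        List.replicate (n * j) (tp hd) ++ w
          = List.replicate (n * (r/2) + r % 2) (tp hd) ++ w' ∧
        r + w'.length = m + 2 ∧ (∀ x ∈ w', x < tp hd) ∧
        List.Chain' (· > ·) w' := by
    rcases w with _ | ⟨x, v⟩
    · have h2 : (2*j) / 2 = j := by omega
      have h3 : (2*j) % 2 = 0 := by omega
      refine ⟨[], 2 * j, Or.inl rfl, by rw [h2, h3]; simp, by simpa using hlen, by simp,
        List.isChain_nil⟩
    · have hpw : ∀ y ∈ v, y < x := by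
        have := (List.isChain_iff_pairwise.mp hch)
        intro y hy
        exact List.rel_of_pairwise_cons this hy
      by_cases hx : x = tp hd
      · refine ⟨v, 2 * j + 1, Or.inr rfl, ?_, ?_, ?_, (List.isChain_cons.mp hch).2⟩
        · have h2 : (2*j+1) / 2 = j := by omega
          have h3 : (2*j+1) % 2 = 1 := by omega
          rw [h2, h3, List.replicate_succ', hx]
          simp
        · simp only [List.length_cons] at hlen; omega
        · intro y hy; rw [← hx]; exact hpw y hy
      · refine ⟨x :: v, 2 * j, Or.inl rfl, ?_, ?_, ?_, hch⟩
        · have h2 : (2*j) / 2 = j := by omega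
          have h3 : (2*j) % 2 = 0 := by omega
          rw [h2, h3]; simp
        · simp only [List.length_cons] at hlen ⊢; omega
        · intro y hy
          rcases List.mem_cons.mp hy with rfl | hy'
          · exact lt_tp_of_ne hd hx
          · exact lt_of_lt_of_le (hpw y hy') (le_tp hd x)
  have hrle : r ≤ m + 2 := by omega
  set U : ℕ → List (Fin d) := fun i =>
    if i < r then List.replicate (tsize n i) (tp hd)
    else [w'.getD (i - r) (tp hd)] with hU
  -- basic facts about U
  have hUirr : ∀ i, ¬ Reducible d n hd (U i) := by
    intro i
    rw [hU]; dsimp only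
    split
    · exact not_red_replicate hd (tsize_lt hn i)
    · exact not_red_single hd hn _
  have hUw' : ∀ i, r ≤ i → i < m + 2 → ∃ b : Fin d, b < tp hd ∧ U i = [b] := by
    intro i h1 h2
    refine ⟨w'.getD (i - r) (tp hd), ?_, by rw [hU]; simp [Nat.not_lt.mpr h1]⟩
    apply hw'mem
    rw [List.getD_eq_getElem _ _ (by omega : i - r < w'.length)]
    exact List.getElem_mem _
  refine ⟨fun i => U i.val, ?_, fun i _ => hUirr i.val, ?_, ?_⟩
  · -- u 0 is a single letter
    by_cases h0 : 0 < r
    · refine ⟨tp hd, ?_⟩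
      show U 0 = _
      rw [hU]; simp only [if_pos h0]
      have h1 : tsize n 0 = 1 := by unfold tsize; simp
      rw [h1]; rfl
    · obtain ⟨b, -, hb⟩ := hUw' 0 (by omega) (by omega)
      exact ⟨b, hb⟩
  · -- the flatten equation
    have hofn : List.ofFn (fun i : Fin (m+2) => U i.val) = (List.range (m+2)).map U := by
      rw [← List.map_coe_finRange_eq_range (n := m+2), List.map_map, List.ofFn_eq_map]
      rfl
    rw [hofn, hww']
    have hsplit : List.range (m+2) = List.range r ++ List.range' r (m+2-r) := by
      rw [List.range_eq_range', List.range_eq_range']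
      have := List.range'_append (s := 0) (m := r) (n := m+2-r) (step := 1)
      simp only [Nat.zero_add, Nat.one_mul] at this
      rw [this]
      congr 1; omega
    rw [hsplit, List.map_append, List.flatten_append]
    have hfirst : ((List.range r).map U).flatten
        = List.replicate (n * (r/2) + r % 2) (tp hd) := by
      refine flatten_rep hd hn U r (fun i hi => ?_) r le_rfl
      rw [hU]; simp only [if_pos hi]
    have hsecond : ((List.range' r (m+2-r)).map U).flatten = w' := by
      have hlen' : m + 2 - r = w'.length := by omega
      rw [hlen']
      have hcong : (List.range' r w'.length).map U
          = (List.range' r w'.length).map (fun i => [w'.getD (i - r) (tp hd)]) := by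
        apply List.map_congr_left
        intro i hi
        have hir : r ≤ i := (List.mem_range'_1.mp hi).1
        rw [hU]; simp only [if_neg (Nat.not_lt.mpr hir)]
      rw [hcong, flatten_singletons]
    rw [hfirst, hsecond]
  · -- junctions
    intro i
    have hiv : (i : ℕ) + 1 < m + 2 := by omega
    simp only [Fin.coe_castSucc, Fin.val_succ]
    by_cases h1 : (i : ℕ) + 1 < r
    · -- both t-pieces
      have hUa : U i.val = List.replicate (tsize n i.val) (tp hd) := by
        rw [hU]; simp only [if_pos (by omega : (i:ℕ) < r)]
      have hUb : U (i.val + 1) = List.replicate (tsize n (i.val+1)) (tp hd) := by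
        rw [hU]; simp only [if_pos h1]
      constructor
      · rw [hUa, hUb, ← List.replicate_add, tsize_sum hn i.val]
        exact red_rep_n hd
      · intro e he hne
        rw [hUb] at he hne
        have hmem : ∀ z ∈ e, z = tp hd := fun z hz =>
          List.eq_of_mem_replicate (he.sublist.subset hz)
        have herep : e = List.replicate e.length (tp hd) := List.eq_replicate_of_mem hmem
        have hle : e.length ≤ tsize n (i.val+1) := by simpa using he.length_le
        have hlt : e.length < tsize n (i.val+1) := by
          rcases lt_or_eq_of_le hle with h | h
          · exact h
          · exact absurd (by rw [herep, h]) hne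
        rw [hUa, herep, ← List.replicate_add]
        refine not_red_replicate hd ?_
        have := tsize_sum hn i.val
        omega
    · by_cases h2 : (i : ℕ) < r
      · -- boundary: t-piece then first descent letter
        have hreq : r = (i : ℕ) + 1 := by omega
        have hUa : U i.val = List.replicate (tsize n i.val) (tp hd) := by
          rw [hU]; simp only [if_pos h2]
        obtain ⟨b, hb, hUb⟩ := hUw' (i.val+1) (by omega) hiv
        constructor
        · rw [hUa, hUb]
          have hts : tsize n i.val = (tsize n i.val - 1) + 1 := by
            have := tsize_pos hn i.val; omega
          rw [hts, List.replicate_succ']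
          have := red_desc (n := n) hd hb (List.replicate (tsize n i.val - 1) (tp hd)) []
          simpa using this
        · intro e he hne
          rw [hUb] at he hne
          rw [prefix_single he hne]
          simpa using hUirr i.val
      · -- two descent letters
        have hUa : U i.val = [w'.getD (i.val - r) (tp hd)] := by
          rw [hU]; simp only [if_neg h2]
        have hUb : U (i.val + 1) = [w'.getD (i.val + 1 - r) (tp hd)] := by
          rw [hU]; simp only [if_neg h1]
        have hk1 : i.val - r < w'.length := by omega
        have hk2 : i.val + 1 - r < w'.length := by omega
        have hgt : w'.getD (i.val + 1 - r) (tp hd) < w'.getD (i.val - r) (tp hd) := by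
          clear hUa hUb hUirr hUw' hU
          have heq : (i : ℕ) + 1 - r = (i : ℕ) - r + 1 := by omega
          rw [heq, List.getD_eq_getElem _ _ hk1, List.getD_eq_getElem _ _ (by omega)]
          have := List.isChain_iff_getElem.mp hw'ch ((i : ℕ) - r) (by omega)
          simpa using this
        constructor
        · rw [hUa, hUb]
          have := red_desc (n := n) hd hgt [] []
          simpa using this
        · intro e he hne
          rw [hUb] at he hne
          rw [prefix_single he hne]
          simpa using hUirr i.val

end Bwd

section Conv
variable {d n : ℕ} (hd : 0 < d)

lemma chain_ofFn_rev {l : ℕ} {v : Fin l → Fin d} (hv : StrictMono v) :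
    List.Chain' (· > ·) ((List.ofFn v).reverse) := by
  show List.IsChain _ _
  rw [List.isChain_reverse]
  rw [List.isChain_iff_getElem]
  intro i h
  simp only [List.getElem_ofFn]
  show v _ > v _
  apply hv
  simp only [List.length_ofFn] at h
  simp [Fin.lt_def]

lemma chainToFn {w : List (Fin d)} (hch : List.Chain' (· > ·) w) :
    ∃ v : Fin w.length → Fin d, StrictMono v ∧ w = (List.ofFn v).reverse := by
  have hs : List.Chain' (· < ·) w.reverse := by
    show List.IsChain _ _
    rw [List.isChain_reverse]
    exact hch
  have hsorted : List.Pairwise (· < ·) w.reverse := List.isChain_iff_pairwise.mp hs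
  refine ⟨fun i => w.reverse.get (Fin.cast w.length_reverse.symm i), ?_, ?_⟩
  · intro a b hab
    exact hsorted.sortedLT.strictMono_get ((Fin.cast_lt_cast _).mpr hab)
  · have : List.ofFn (fun i : Fin w.length => w.reverse.get (Fin.cast w.length_reverse.symm i))
        = List.ofFn w.reverse.get := by
      rw [List.ofFn_congr w.length_reverse]
    rw [this, List.ofFn_get, List.reverse_reverse]

lemma no_two_tops {c : ℕ} {w w' : List (Fin d)} (hc : 2 ≤ c)
    (hch : List.Chain' (· > ·) w) (h : w = List.replicate c (tp hd) ++ w') : False := by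
  rcases c with _ | c; · omega
  rcases c with _ | c; · omega
  rw [List.replicate_succ, List.replicate_succ] at h
  subst h
  exact lt_irrefl _ (List.isChain_cons_cons.mp hch).1

lemma rep_desc_unique {a b : ℕ} {w w' : List (Fin d)}
    (hw : List.Chain' (· > ·) w) (hw' : List.Chain' (· > ·) w')
    (hab : a = b ∨ 2 ≤ (a : ℤ) - b ∨ 2 ≤ (b : ℤ) - a)
    (h : List.replicate a (tp hd) ++ w = List.replicate b (tp hd) ++ w') :
    a = b ∧ w = w' := by
  rcases Nat.lt_trichotomy a b with hlt | heq | hgt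
  · exfalso
    have hbb : List.replicate b (tp hd)
        = List.replicate a (tp hd) ++ List.replicate (b - a) (tp hd) := by
      rw [← List.replicate_add]; congr 1; omega
    rw [hbb, List.append_assoc] at h
    have hw2 : w = List.replicate (b - a) (tp hd) ++ w' := List.append_cancel_left h
    exact no_two_tops hd (by omega) hw hw2
  · refine ⟨heq, ?_⟩
    subst heq
    exact List.append_cancel_left h
  · exfalso
    have hbb : List.replicate a (tp hd)
        = List.replicate b (tp hd) ++ List.replicate (a - b) (tp hd) := by
      rw [← List.replicate_add]; congr 1; omega
    rw [hbb, List.append_assoc] at h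
    have hw2 : w' = List.replicate (a - b) (tp hd) ++ w :=
      (List.append_cancel_left h).symm
    exact no_two_tops hd (by omega) hw' hw2

end Conv


theorem ambiguities_of_hypersurface_reduction_system (hd : 0 < d) (hn : 2 ≤ n) (m : ℕ) :
    {p | IsAmbiguity d n hd m p} =
      {p : List (Fin d) | ∃ (j l : ℕ) (v : Fin l → Fin d), StrictMono v ∧
        2 * j + l = m + 2 ∧
        p = List.replicate (n * j) (⟨d - 1, by omega⟩ : Fin d) ++ (List.ofFn v).reverse} ∧
    {p | IsAmbiguity d n hd m p}.ncard =
      ∑ j ∈ Finset.range (m / 2 + 2), d.choose (m + 2 - 2 * j) := by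
  classical
  have hset : {p | IsAmbiguity d n hd m p} =
      {p : List (Fin d) | ∃ (j l : ℕ) (v : Fin l → Fin d), StrictMono v ∧
        2 * j + l = m + 2 ∧
        p = List.replicate (n * j) (⟨d - 1, by omega⟩ : Fin d) ++ (List.ofFn v).reverse} := by
    ext p
    simp only [Set.mem_setOf_eq]
    constructor
    · intro h
      obtain ⟨j, w, hch, hlen, hpeq⟩ := forward hd hn h
      obtain ⟨v, hv, hw⟩ := chainToFn hch
      exact ⟨j, w.length, v, hv, hlen, by rw [hpeq]; exact congrArg _ hw⟩
    · rintro ⟨j, l, v, hv, hlen, rfl⟩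
      exact backward hd hn j _ (chain_ofFn_rev hv) (by simpa using hlen)
  refine ⟨hset, ?_⟩
  rw [hset]
  set F : (Σ jj : Fin (m / 2 + 2),
      {s : Finset (Fin d) // s.card = m + 2 - 2 * jj.val}) → List (Fin d) :=
    fun x => List.replicate (n * x.1.val) (tp hd) ++
      (List.ofFn (fun i => x.2.1.orderEmbOfFin x.2.2 i)).reverse with hF
  have hrange : {p : List (Fin d) | ∃ (j l : ℕ) (v : Fin l → Fin d), StrictMono v ∧
        2 * j + l = m + 2 ∧
        p = List.replicate (n * j) (⟨d - 1, by omega⟩ : Fin d) ++ (List.ofFn v).reverse}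
      = Set.range F := by
    ext p
    simp only [Set.mem_setOf_eq, Set.mem_range]
    constructor
    · rintro ⟨j, l, v, hv, hlen, rfl⟩
      have hjlt : j < m / 2 + 2 := by omega
      have hleq : l = m + 2 - 2 * j := by omega
      subst hleq
      have hcard : (Finset.image v Finset.univ).card = m + 2 - 2 * j := by
        rw [Finset.card_image_of_injective _ hv.injective]; simp
      refine ⟨⟨⟨j, hjlt⟩, ⟨Finset.image v Finset.univ, hcard⟩⟩, ?_⟩
      have hv2 : v = ⇑((Finset.image v Finset.univ).orderEmbOfFin hcard) :=
        Finset.orderEmbOfFin_unique hcard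
          (fun x => Finset.mem_image_of_mem _ (Finset.mem_univ x)) hv
      rw [hF]
      simp only
      rw [← hv2]
      rfl
    · rintro ⟨⟨j, s, hs⟩, rfl⟩
      refine ⟨j.val, m + 2 - 2 * j.val, fun i => s.orderEmbOfFin hs i,
        (s.orderEmbOfFin hs).strictMono, ?_, rfl⟩
      have := j.2; omega
  have hinj : Function.Injective F := by
    rintro ⟨j, s, hs⟩ ⟨j', s', hs'⟩ heq
    rw [hF] at heq
    simp only at heq
    have hch1 := chain_ofFn_rev (d := d) (s.orderEmbOfFin hs).strictMono
    have hch2 := chain_ofFn_rev (d := d) (s'.orderEmbOfFin hs').strictMono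
    have hab : n * j.val = n * j'.val ∨ 2 ≤ ((n * j.val : ℕ) : ℤ) - ((n * j'.val : ℕ) : ℤ) ∨
        2 ≤ ((n * j'.val : ℕ) : ℤ) - ((n * j.val : ℕ) : ℤ) := by
      rcases Nat.lt_trichotomy j.val j'.val with h | h | h
      · have hle : n * (j.val + 1) ≤ n * j'.val :=
          Nat.mul_le_mul le_rfl (by omega)
        rw [Nat.mul_add, Nat.mul_one] at hle
        right; right
        generalize n * j.val = A at hle ⊢
        generalize n * j'.val = B at hle ⊢
        omega
      · exact Or.inl (by rw [h])
      · have hle : n * (j'.val + 1) ≤ n * j.val :=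
          Nat.mul_le_mul le_rfl (by omega)
        rw [Nat.mul_add, Nat.mul_one] at hle
        right; left
        generalize n * j.val = A at hle ⊢
        generalize n * j'.val = B at hle ⊢
        omega
    obtain ⟨hrep, hofn⟩ := rep_desc_unique hd hch1 hch2 hab heq
    have hjv : j.val = j'.val := Nat.eq_of_mul_eq_mul_left (by omega) hrep
    have hj : j = j' := Fin.ext hjv
    subst hj
    have hofn' := List.reverse_injective hofn
    have hfun : (fun i => s.orderEmbOfFin hs i) = (fun i => s'.orderEmbOfFin hs' i) :=
      List.ofFn_injective hofn'
    have hss : s = s' := by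
      apply Finset.coe_injective
      rw [← Finset.range_orderEmbOfFin s hs, ← Finset.range_orderEmbOfFin s' hs']
      exact congrArg Set.range hfun
    subst hss
    rfl
  rw [hrange]
  rw [← Nat.card_coe_set_eq, Nat.card_range_of_injective hinj,
    Nat.card_eq_fintype_card, Fintype.card_sigma]
  simp_rw [Fintype.card_finset_len, Fintype.card_fin]
  exact Fin.sum_univ_eq_sum_range (fun j => d.choose (m + 2 - 2 * j)) (m / 2 + 2)
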